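/- arXiv:1905.03416 — 8 statements merged into one kernel-verified Lean document; each statement's English description precedes it below -/
import Mathlib

section
/- Let X and Y be real normed vector spaces, L ≥ 0, Ω ⊆ X a convex set, and f : X → Y a function. Suppose f is pointwise Lipschitz on Ω with uniform constant L; that is, for every x₀ ∈ Ω there exists r > 0 such that ‖f(x) − f(x₀)‖ ≤ L‖x − x₀‖ for every x ∈ Ω with ‖x − x₀‖ ≤ r. Then f is Lipschitz on Ω with constant L: ‖f(x₁) − f(x₂)‖ ≤ L‖x₁ − x₂‖ for all x₁, x₂ ∈ Ω. -/
/-!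
Restricted to the segment `t ↦ x₂ + t • (x₁ - x₂)`, `f` becomes a function on `[0, 1]` that is
pointwise `L‖x₁ - x₂‖`-Lipschitz. On an interval `[a, b]` such a function is continuous, so the set
of `t` with `dist (g t) (g a) ≤ K (t - a)` is closed in `[a, b]`; the local bound at the right of
each of its points, together with the triangle inequality, lets it grow to the right, and real
induction gives all of `[a, b]`.
-/

open Set Filter Topology

def PointwiseLipschitzOn {α β : Type*} [PseudoMetricSpace α] [PseudoMetricSpace β]
    (L : ℝ) (f : α → β) (s : Set α) : Prop :=
  ∀ x ∈ s, ∀ᶠ y in 𝓝[s] x, dist (f y) (f x) ≤ L * dist y x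

namespace PointwiseLipschitzOn

variable {Y : Type*} [PseudoMetricSpace Y]

theorem continuousOn {α : Type*} [PseudoMetricSpace α] {L : ℝ} {f : α → Y} {s : Set α}
    (hf : PointwiseLipschitzOn L f s) : ContinuousOn f s := by
  intro x hx
  rw [ContinuousWithinAt, tendsto_iff_dist_tendsto_zero]
  have hdist : Tendsto (fun y => L * dist y x) (𝓝[s] x) (𝓝 0) := by
    simpa using (((continuous_id.dist continuous_const).tendsto' x 0 (dist_self x)).mono_left
      nhdsWithin_le_nhds).const_mul L
  exact squeeze_zero' (Eventually.of_forall fun _ => dist_nonneg) (hf x hx) hdist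

theorem dist_le_mul_of_Icc {K a b : ℝ} {g : ℝ → Y} (hab : a ≤ b)
    (hg : PointwiseLipschitzOn K g (Icc a b)) : dist (g b) (g a) ≤ K * (b - a) := by
  set S := {t | dist (g t) (g a) ≤ K * (t - a)}
  have hS : IsClosed (S ∩ Icc a b) := by
    rw [inter_comm]
    exact isClosed_Icc.isClosed_le
      (continuous_dist.comp_continuousOn (hg.continuousOn.prodMk continuousOn_const))
      (continuousOn_const.mul (continuousOn_id.sub continuousOn_const))
  refine hS.Icc_subset_of_forall_mem_nhdsWithin (by simp [S]) ?_ ⟨hab, le_rfl⟩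
  rintro t ⟨htS, htab⟩
  filter_upwards [nhdsWithin_le_of_mem (Icc_mem_nhdsGT_of_mem htab)
    (hg t (Ico_subset_Icc_self htab)), self_mem_nhdsWithin] with u hu (htu : t < u)
  rw [Real.dist_eq, abs_of_pos (sub_pos.2 htu)] at hu
  calc dist (g u) (g a) ≤ dist (g u) (g t) + dist (g t) (g a) := dist_triangle _ _ _
    _ ≤ K * (u - t) + K * (t - a) := add_le_add hu htS
    _ = K * (u - a) := by ring

theorem comp_lineMap {E : Type*} [NormedAddCommGroup E] [NormedSpace ℝ E] {L : ℝ} {f : E → Y}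
    {s : Set E} (hf : PointwiseLipschitzOn L f s) (hs : Convex ℝ s) {x y : E} (hx : x ∈ s)
    (hy : y ∈ s) :
    PointwiseLipschitzOn (L * dist x y) (f ∘ AffineMap.lineMap x y) (Icc (0 : ℝ) 1) := by
  intro t ht
  have hγ : Tendsto (AffineMap.lineMap x y) (𝓝[Icc 0 1] t) (𝓝[s] (AffineMap.lineMap x y t)) :=
    AffineMap.lineMap_continuous.continuousWithinAt.tendsto_nhdsWithin (hs.mapsTo_lineMap hx hy)
  filter_upwards [hγ.eventually (hf _ (hs.lineMap_mem hx hy ht))] with u hu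
  rw [dist_lineMap_lineMap] at hu
  exact hu.trans_eq (by ring)

end PointwiseLipschitzOn

theorem pointwise_lipschitz_of_convex_general
    {X Y : Type*} [NormedAddCommGroup X] [NormedSpace ℝ X]
    [NormedAddCommGroup Y]
    (L : ℝ) (Ω : Set X) (hΩ : Convex ℝ Ω) (f : X → Y)
    (h : ∀ x₀ ∈ Ω, ∃ r > 0, ∀ x ∈ Ω, ‖x - x₀‖ ≤ r → ‖f x - f x₀‖ ≤ L * ‖x - x₀‖) :
    ∀ x₁ ∈ Ω, ∀ x₂ ∈ Ω, ‖f x₁ - f x₂‖ ≤ L * ‖x₁ - x₂‖ := by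
  intro x₁ hx₁ x₂ hx₂
  have hf : PointwiseLipschitzOn L f Ω := fun x₀ hx₀ => by
    obtain ⟨r, hr, hfr⟩ := h x₀ hx₀
    filter_upwards [mem_nhdsWithin_of_mem_nhds (Metric.closedBall_mem_nhds x₀ hr),
      self_mem_nhdsWithin] with x hxr hx
    simpa only [dist_eq_norm] using hfr x hx (mem_closedBall_iff_norm.1 hxr)
  simpa [dist_eq_norm, norm_sub_rev x₂ x₁] using
    (hf.comp_lineMap hΩ hx₂ hx₁).dist_le_mul_of_Icc zero_le_one

/-- If `f` is pointwise Lipschitz on a convex set `Ω` with uniform constant `L`,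
then `f` is Lipschitz on `Ω` with constant `L`. -/
theorem pointwise_lipschitz_of_convex
    {X Y : Type*} [NormedAddCommGroup X] [NormedSpace ℝ X]
    [NormedAddCommGroup Y] [NormedSpace ℝ Y]
    (L : ℝ) (hL : 0 ≤ L) (Ω : Set X) (hΩ : Convex ℝ Ω) (f : X → Y)
    (h : ∀ x₀ ∈ Ω, ∃ r > 0, ∀ x ∈ Ω, ‖x - x₀‖ ≤ r → ‖f x - f x₀‖ ≤ L * ‖x - x₀‖) :
    ∀ x₁ ∈ Ω, ∀ x₂ ∈ Ω, ‖f x₁ - f x₂‖ ≤ L * ‖x₁ - x₂‖ :=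
  pointwise_lipschitz_of_convex_general L Ω hΩ f h
end

section
/- Let A : ℝ^d → ℝ^{m×n} be a matrix-valued function that is continuous at x₀ ∈ ℝ^d, and let A⁺ : ℝ^d → ℝ^{n×m} assign to each x the Moore–Penrose pseudoinverse of A(x). Then A⁺ is continuous at x₀ if and only if there is a neighborhood of x₀ on which rank(A(x)) = rank(A(x₀)). -/
/-!
The trace of the idempotent `A x * P x` is `rank (A x)`; it depends continuously on `x` when
`P` does, and an integer-valued function continuous at `x₀` is locally constant there.

Conversely, the matrices `P x * A x` are symmetric idempotents, hence lie in a compact set. If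
the rank is locally constant, every cluster point `E` of `P * A` at `x₀` is a symmetric
idempotent with `A x₀ * E = A x₀` and trace `rank (A x₀)`, which forces `E = P x₀ * A x₀`. So
`P * A` is continuous at `x₀`, and then so is `P = (Aᵀ A + 1 - P A)⁻¹ Aᵀ`, where the inverted
matrix is always invertible (its inverse is `P Pᵀ + 1 - P A`).
-/

open Matrix Filter Topology

theorem Filter.Tendsto.mapClusterPt_prodMk {α X Y : Type*} [TopologicalSpace X]
    [TopologicalSpace Y] {l : Filter α} {f : α → X} {g : α → Y} {a : X} {b : Y}
    (hf : Tendsto f l (𝓝 a)) (hg : MapClusterPt b l g) :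
    MapClusterPt (a, b) l fun x => (f x, g x) := by
  rw [((𝓝 a).basis_sets.prod_nhds (𝓝 b).basis_sets).mapClusterPt_iff_frequently]
  rintro ⟨s, t⟩ ⟨hs, ht⟩
  exact ((mapClusterPt_iff_frequently.1 hg t ht).and_eventually (hf hs)).mono
    fun x hx => ⟨hx.2, hx.1⟩

theorem Filter.Tendsto.matrix_mul {α R k m n : Type*} [Fintype m] [TopologicalSpace R]
    [NonUnitalNonAssocSemiring R] [IsTopologicalSemiring R] {l : Filter α}
    {f : α → Matrix k m R} {g : α → Matrix m n R} {a : Matrix k m R} {b : Matrix m n R}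
    (hf : Tendsto f l (𝓝 a)) (hg : Tendsto g l (𝓝 b)) :
    Tendsto (fun x => f x * g x) l (𝓝 (a * b)) :=
  ((continuous_fst.matrix_mul continuous_snd).tendsto (a, b)).comp (hf.prodMk_nhds hg)

theorem Filter.Tendsto.matrix_transpose {α R m n : Type*} [TopologicalSpace R] {l : Filter α}
    {f : α → Matrix m n R} {a : Matrix m n R} (hf : Tendsto f l (𝓝 a)) :
    Tendsto (fun x => (f x)ᵀ) l (𝓝 aᵀ) :=
  (continuous_id.matrix_transpose.tendsto a).comp hf

namespace Matrix

variable {n : Type*} [Fintype n]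

theorem trace_eq_rank_of_isIdempotentElem {K : Type*} [Field K] {E : Matrix n n K}
    (hE : IsIdempotentElem E) : E.trace = E.rank := by
  classical
  have h : IsIdempotentElem (toLin' E) := hE.map (toLinAlgEquiv' (R := K))
  rw [← trace_toLin'_eq, (LinearMap.IsIdempotentElem.isProj_range _ h).trace]
  rfl

theorem abs_apply_le_one_of_isIdempotentElem {E : Matrix n n ℝ} (hsymm : Eᵀ = E)
    (hE : IsIdempotentElem E) (i j : n) : |E i j| ≤ 1 := by
  have hdiag (k : n) : ∑ i, E i k ^ 2 = E k k := by
    have hEE : Eᵀ * E = E := by rw [hsymm]; exact hE.eq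
    calc ∑ i, E i k ^ 2 = (Eᵀ * E) k k := by simp only [mul_apply, transpose_apply, sq]
      _ = E k k := by rw [hEE]
  have hle (k : n) : E k j ^ 2 ≤ E j j :=
    hdiag j ▸ Finset.single_le_sum (fun i _ => sq_nonneg (E i j)) (Finset.mem_univ k)
  have hjj : E j j ≤ 1 := by nlinarith [hle j]
  rw [← sq_le_one_iff_abs_le_one]
  exact (hle i).trans hjj

theorem isCompact_setOf_transpose_eq_and_isIdempotentElem :
    IsCompact {E : Matrix n n ℝ | Eᵀ = E ∧ IsIdempotentElem E} := by
  refine (isCompact_Icc (a := (-1 : ℝ)) (b := 1)).matrix.of_isClosed_subset ?_ ?_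
  · exact (isClosed_eq continuous_id.matrix_transpose continuous_id).inter
      (isClosed_eq (continuous_id.matrix_mul continuous_id) continuous_id)
  · rintro E ⟨hsymm, hE⟩ i j
    exact abs_le.1 (abs_apply_le_one_of_isIdempotentElem hsymm hE i j)

theorem eq_of_mul_eq_of_trace_eq {E F : Matrix n n ℝ} (hEs : Eᵀ = E) (hFs : Fᵀ = F)
    (hE : IsIdempotentElem E) (hF : IsIdempotentElem F) (hEF : E * F = E)
    (htr : E.trace = F.trace) : E = F := by
  have hFE : F * E = E := by rw [← hEs, ← hFs, ← transpose_mul, hEF]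
  have hsq : (F - E)ᴴ * (F - E) = F - E := by
    rw [conjTranspose_eq_transpose_of_trivial, transpose_sub, hEs, hFs]
    simp only [sub_mul, mul_sub, hE.eq, hF.eq, hEF, hFE]
    abel
  have : F - E = 0 := by
    rw [← trace_conjTranspose_mul_self_eq_zero_iff, hsq, trace_sub, htr, sub_self]
  exact (sub_eq_zero.1 this).symm

structure IsMoorePenroseInverse {R m n : Type*} [CommRing R] [Fintype m] [Fintype n]
    (A : Matrix m n R) (P : Matrix n m R) : Prop where
  mul_inv_mul : A * P * A = A
  inv_mul_inv : P * A * P = P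
  transpose_mul_inv : (A * P)ᵀ = A * P
  transpose_inv_mul : (P * A)ᵀ = P * A

namespace IsMoorePenroseInverse

variable {R K m n : Type*} [CommRing R] [Field K] [Fintype m] [Fintype n]

section CommRing

variable {A : Matrix m n R} {P : Matrix n m R}

theorem isIdempotentElem_mul_inv (h : IsMoorePenroseInverse A P) :
    IsIdempotentElem (A * P) := by
  rw [IsIdempotentElem, ← Matrix.mul_assoc, h.mul_inv_mul]

theorem isIdempotentElem_inv_mul (h : IsMoorePenroseInverse A P) :
    IsIdempotentElem (P * A) := by
  rw [IsIdempotentElem, ← Matrix.mul_assoc, h.inv_mul_inv]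

theorem rank_mul_inv [Nontrivial R] (h : IsMoorePenroseInverse A P) : (A * P).rank = A.rank :=
  le_antisymm (rank_mul_le_left _ _) (by
    conv_lhs => rw [← h.mul_inv_mul]
    exact rank_mul_le_left _ _)

theorem rank_inv_mul [Nontrivial R] (h : IsMoorePenroseInverse A P) : (P * A).rank = A.rank :=
  le_antisymm (rank_mul_le_right _ _) (by
    conv_lhs => rw [← h.mul_inv_mul, Matrix.mul_assoc]
    exact rank_mul_le_right _ _)

theorem transpose_mul_mul_inv (h : IsMoorePenroseInverse A P) : Aᵀ * A * P = Aᵀ := by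
  rw [Matrix.mul_assoc, ← h.transpose_mul_inv, ← transpose_mul, h.mul_inv_mul]

variable [DecidableEq n]

theorem mul_eq_transpose (h : IsMoorePenroseInverse A P) :
    (Aᵀ * A + 1 - P * A) * P = Aᵀ := by
  rw [Matrix.sub_mul, Matrix.add_mul, h.inv_mul_inv, Matrix.one_mul, add_sub_cancel_right,
    h.transpose_mul_mul_inv]

theorem mul_eq_one (h : IsMoorePenroseInverse A P) :
    (Aᵀ * A + 1 - P * A) * (P * Pᵀ + 1 - P * A) = 1 := by
  have hPA : Aᵀ * Pᵀ = P * A := by rw [← transpose_mul, h.transpose_inv_mul]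
  simp only [Matrix.mul_add, Matrix.add_mul, Matrix.mul_sub, Matrix.sub_mul, Matrix.mul_one,
    Matrix.one_mul, ← Matrix.mul_assoc, h.transpose_mul_mul_inv, h.inv_mul_inv, hPA]
  abel

theorem eq_inv_mul (h : IsMoorePenroseInverse A P) : P = (Aᵀ * A + 1 - P * A)⁻¹ * Aᵀ := by
  conv_lhs =>
    rw [← nonsing_inv_mul_cancel_left _ P (isUnit_det_of_right_inverse h.mul_eq_one)]
  rw [h.mul_eq_transpose]

end CommRing

theorem trace_mul_inv {A : Matrix m n K} {P : Matrix n m K}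
    (h : IsMoorePenroseInverse A P) : (A * P).trace = A.rank := by
  rw [trace_eq_rank_of_isIdempotentElem h.isIdempotentElem_mul_inv, h.rank_mul_inv]

theorem trace_inv_mul {A : Matrix m n K} {P : Matrix n m K}
    (h : IsMoorePenroseInverse A P) : (P * A).trace = A.rank := by
  rw [trace_eq_rank_of_isIdempotentElem h.isIdempotentElem_inv_mul, h.rank_inv_mul]

section Limits

variable {α : Type*} {l : Filter α} {A : α → Matrix m n ℝ} {P : α → Matrix n m ℝ}
  {A₀ : Matrix m n ℝ} {P₀ : Matrix n m ℝ}

theorem eventually_rank_eq_of_tendsto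
    (hP : ∀ᶠ x in l, IsMoorePenroseInverse (A x) (P x)) (hP₀ : IsMoorePenroseInverse A₀ P₀)
    (hA : Tendsto A l (𝓝 A₀)) (hPt : Tendsto P l (𝓝 P₀)) :
    ∀ᶠ x in l, (A x).rank = A₀.rank := by
  have htrace : Tendsto (fun x => (A x * P x).trace) l (𝓝 (A₀ * P₀).trace) :=
    (continuous_id.matrix_trace.tendsto _).comp (hA.matrix_mul hPt)
  have hrank : Tendsto (fun x => ((A x).rank : ℝ)) l (𝓝 (A₀.rank : ℝ)) := by
    rw [hP₀.trace_mul_inv] at htrace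
    exact htrace.congr' (hP.mono fun x hx => hx.trace_mul_inv)
  rw [← Function.comp_def, ← Nat.isClosedEmbedding_coe_real.isInducing.tendsto_nhds_iff,
    nhds_discrete, tendsto_pure] at hrank
  exact hrank

theorem tendsto_inv_mul_of_eventually_rank_eq
    (hP : ∀ᶠ x in l, IsMoorePenroseInverse (A x) (P x)) (hP₀ : IsMoorePenroseInverse A₀ P₀)
    (hA : Tendsto A l (𝓝 A₀)) (hrank : ∀ᶠ x in l, (A x).rank = A₀.rank) :
    Tendsto (fun x => P x * A x) l (𝓝 (P₀ * A₀)) := by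
  set K := {E : Matrix n n ℝ | Eᵀ = E ∧ IsIdempotentElem E} ∩ {E | E.trace = A₀.rank}
  have hK : IsCompact K := isCompact_setOf_transpose_eq_and_isIdempotentElem.inter_right
    (isClosed_eq continuous_id.matrix_trace continuous_const)
  have hPA : ∀ᶠ x in l, P x * A x ∈ K := (hP.and hrank).mono fun x ⟨hx, hxr⟩ =>
    ⟨⟨hx.transpose_inv_mul, hx.isIdempotentElem_inv_mul⟩,
      show (P x * A x).trace = _ by rw [hx.trace_inv_mul, hxr]⟩
  refine hK.tendsto_nhds_of_unique_mapClusterPt hPA ?_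
  rintro E ⟨⟨hEs, hE⟩, hEtr⟩ hcluster
  have hAE : A₀ * E = A₀ := by
    have hclosed : IsClosed {p : Matrix m n ℝ × Matrix n n ℝ | p.1 * p.2 = p.1} :=
      isClosed_eq (continuous_fst.matrix_mul continuous_snd) continuous_fst
    refine hclosed.mem_of_mapClusterPt (hA.mapClusterPt_prodMk hcluster) (hP.mono fun x hx => ?_)
    show A x * (P x * A x) = A x
    rw [← Matrix.mul_assoc, hx.mul_inv_mul]
  refine eq_of_mul_eq_of_trace_eq hP₀.transpose_inv_mul hEs hP₀.isIdempotentElem_inv_mul hE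
    ?_ ?_ |>.symm
  · rw [Matrix.mul_assoc, hAE]
  · rw [hP₀.trace_inv_mul, hEtr]

theorem tendsto_of_eventually_rank_eq [DecidableEq n]
    (hP : ∀ᶠ x in l, IsMoorePenroseInverse (A x) (P x)) (hP₀ : IsMoorePenroseInverse A₀ P₀)
    (hA : Tendsto A l (𝓝 A₀)) (hrank : ∀ᶠ x in l, (A x).rank = A₀.rank) :
    Tendsto P l (𝓝 P₀) := by
  have hM : Tendsto (fun x => (A x)ᵀ * A x + 1 - P x * A x) l
      (𝓝 (A₀ᵀ * A₀ + 1 - P₀ * A₀)) :=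
    ((hA.matrix_transpose.matrix_mul hA).add_const 1).sub
      (tendsto_inv_mul_of_eventually_rank_eq hP hP₀ hA hrank)
  have hdet : (A₀ᵀ * A₀ + 1 - P₀ * A₀).det ≠ 0 :=
    (isUnit_det_of_right_inverse hP₀.mul_eq_one).ne_zero
  have hinv : ContinuousAt Inv.inv (A₀ᵀ * A₀ + 1 - P₀ * A₀) :=
    continuousAt_matrix_inv _ (by
      simpa only [Ring.inverse_eq_inv'] using continuousAt_inv₀ hdet)
  rw [hP₀.eq_inv_mul]
  exact ((hinv.tendsto.comp hM).matrix_mul hA.matrix_transpose).congr'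
    (hP.mono fun x hx => hx.eq_inv_mul.symm)

end Limits

end IsMoorePenroseInverse

end Matrix

/-- Continuity of the Moore–Penrose pseudoinverse: if `A : ℝ^d → ℝ^{m×n}` is continuous
at `x₀` and `P x` is the Moore–Penrose pseudoinverse of `A x` for each `x`, then `P` is
continuous at `x₀` iff the rank of `A` is constant in a neighborhood of `x₀`. -/
theorem pseudoinverse_continuousAt_iff_rank_locally_constant
    {d m n : ℕ}
    (A : (Fin d → ℝ) → Matrix (Fin m) (Fin n) ℝ)
    (P : (Fin d → ℝ) → Matrix (Fin n) (Fin m) ℝ)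
    (hP : ∀ x, A x * P x * A x = A x ∧ P x * A x * P x = P x ∧
      (A x * P x)ᵀ = A x * P x ∧ (P x * A x)ᵀ = P x * A x)
    (x₀ : Fin d → ℝ) (hA : ContinuousAt A x₀) :
    ContinuousAt P x₀ ↔ ∀ᶠ x in nhds x₀, (A x).rank = (A x₀).rank := by
  have hMP (x : Fin d → ℝ) : IsMoorePenroseInverse (A x) (P x) :=
    let ⟨h₁, h₂, h₃, h₄⟩ := hP x; ⟨h₁, h₂, h₃, h₄⟩
  exact ⟨IsMoorePenroseInverse.eventually_rank_eq_of_tendsto (.of_forall hMP) (hMP x₀) hA,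
    IsMoorePenroseInverse.tendsto_of_eventually_rank_eq (.of_forall hMP) (hMP x₀) hA⟩
end

section
/- Let A : ℝ^d → ℝ^{m×n} be differentiable (Fréchet) at x₀ ∈ ℝ^d, write A₀ = A(x₀), and suppose rank(A(x)) = rank(A(x₀)) for all x in a neighborhood of x₀. Let A⁺ : ℝ^d → ℝ^{n×m} assign to each x the Moore–Penrose pseudoinverse of A(x). Then A⁺ is differentiable at x₀, and for every direction h ∈ ℝ^d, writing Δ = DA(x₀)h ∈ ℝ^{m×n}, its derivative is DA⁺(x₀)h = −A₀⁺ Δ A₀⁺ + A₀⁺ A₀⁺ᵀ Δᵀ (I_m − A₀A₀⁺) + (I_n − A₀⁺A₀) Δᵀ A₀⁺ᵀ A₀⁺. -/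
/-!
For a Moore–Penrose pair `(A, P)` one has `P = Aᵀ (A Aᵀ + 1 - A P)⁻¹`, the inverted matrix having
inverse `Pᵀ P + 1 - A P`, so `P` is a differentiable function of `A` and of the orthogonal projector
`A P` onto the column space of `A`. Choose `S` such that the columns of `B₀ = A(x₀) S` form a basis
of the column space of `A(x₀)`. The Gram matrix of `B = A(x) S` stays invertible near `x₀`, so `B`
keeps rank `rank A(x₀) = rank A(x)` and spans the column space of `A(x)`; hence
`A(x) P(x) = B (Bᵀ B)⁻¹ Bᵀ` is differentiable at `x₀`, and so is `P`. Differentiating the four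
Penrose equations then determines the derivative.
-/

open Matrix

attribute [local instance] Matrix.normedAddCommGroup Matrix.normedSpace

open Filter Topology

section Calculus

variable {𝕜 : Type*} [NontriviallyNormedField 𝕜] {E : Type*} [NormedAddCommGroup E]
  [NormedSpace 𝕜 E] {l m n : Type*} [Fintype l] [Fintype m] [Fintype n] {x : E}

theorem contDiff_matrix_det [DecidableEq n] : ContDiff 𝕜 ⊤ (fun M : Matrix n n 𝕜 => M.det) := by
  simp only [Matrix.det_apply]
  fun_prop

theorem contDiff_matrix_adjugate [DecidableEq n] :
    ContDiff 𝕜 ⊤ (fun M : Matrix n n 𝕜 => M.adjugate) := by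
  refine contDiff_pi.2 fun i => contDiff_pi.2 fun j => ?_
  simp only [Matrix.adjugate_apply, Matrix.det_apply, Matrix.updateRow_apply]
  refine ContDiff.sum fun σ _ => (contDiff_prod fun k _ => ?_).const_smul _
  split_ifs <;> fun_prop

theorem DifferentiableAt.matrix_inv [DecidableEq n] {f : E → Matrix n n 𝕜}
    (hf : DifferentiableAt 𝕜 f x) (hx : IsUnit (f x).det) :
    DifferentiableAt 𝕜 (fun y => (f y)⁻¹) x := by
  have hdet := (contDiff_matrix_det.differentiable (by simp)).differentiableAt.comp x hf
  have hadj := (contDiff_matrix_adjugate.differentiable (by simp)).differentiableAt.comp x hf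
  simp only [Matrix.inv_def, Ring.inverse_eq_inv']
  exact (hdet.inv hx.ne_zero).smul hadj

variable [CompleteSpace 𝕜]

variable (𝕜 l m n) in
noncomputable def matrixMulCLM : Matrix l m 𝕜 →L[𝕜] Matrix m n 𝕜 →L[𝕜] Matrix l n 𝕜 :=
  (mulLinearMap 𝕜).toContinuousBilinearMap

theorem DifferentiableAt.matrix_mul {f : E → Matrix l m 𝕜} {g : E → Matrix m n 𝕜}
    (hf : DifferentiableAt 𝕜 f x) (hg : DifferentiableAt 𝕜 g x) :
    DifferentiableAt 𝕜 (fun y => f y * g y) x :=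
  ((matrixMulCLM 𝕜 l m n).hasFDerivAt_of_bilinear hf.hasFDerivAt hg.hasFDerivAt).differentiableAt

theorem fderiv_matrix_mul {f : E → Matrix l m 𝕜} {g : E → Matrix m n 𝕜}
    (hf : DifferentiableAt 𝕜 f x) (hg : DifferentiableAt 𝕜 g x) (v : E) :
    fderiv 𝕜 (fun y => f y * g y) x v = fderiv 𝕜 f x v * g x + f x * fderiv 𝕜 g x v :=
  (congrArg (· v) ((matrixMulCLM 𝕜 l m n).fderiv_of_bilinear hf hg)).trans (add_comm _ _)

variable (𝕜 m n) in
noncomputable def matrixTransposeCLE : Matrix m n 𝕜 ≃L[𝕜] Matrix n m 𝕜 :=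
  (transposeLinearEquiv m n 𝕜 𝕜).toContinuousLinearEquiv

theorem DifferentiableAt.matrix_transpose {f : E → Matrix m n 𝕜} (hf : DifferentiableAt 𝕜 f x) :
    DifferentiableAt 𝕜 (fun y => (f y)ᵀ) x :=
  (matrixTransposeCLE 𝕜 m n).differentiableAt.comp x hf

theorem fderiv_matrix_transpose (f : E → Matrix m n 𝕜) (v : E) :
    fderiv 𝕜 (fun y => (f y)ᵀ) x v = (fderiv 𝕜 f x v)ᵀ :=
  congrArg (· v) ((matrixTransposeCLE 𝕜 m n).comp_fderiv (f := f))

end Calculus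

namespace Matrix

variable {m n r : Type*} [Fintype m] [Fintype n] [Fintype r]

section ColumnSpace

variable {R : Type*} [CommRing R]

theorem mul_eq_self_of_range_le {Q : Matrix m m R} {A : Matrix m n R} {B : Matrix m r R}
    (hQB : Q * B = B) (hAB : LinearMap.range A.mulVecLin ≤ LinearMap.range B.mulVecLin) :
    Q * A = A := by
  classical
  refine ext_of_mulVec_single fun i => ?_
  obtain ⟨w, hw⟩ := hAB ⟨Pi.single i 1, rfl⟩
  rw [mulVecLin_apply, mulVecLin_apply] at hw
  rw [← mulVec_mulVec, ← hw, mulVec_mulVec, hQB]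

variable [DecidableEq r]

noncomputable def colSpaceProj (B : Matrix m r R) : Matrix m m R := B * (Bᵀ * B)⁻¹ * Bᵀ

theorem isSymm_colSpaceProj (B : Matrix m r R) : (colSpaceProj B).IsSymm := by
  rw [IsSymm, colSpaceProj, transpose_mul, transpose_mul, transpose_nonsing_inv, transpose_mul,
    transpose_transpose, Matrix.mul_assoc]

theorem colSpaceProj_mul_self {B : Matrix m r R} (hB : IsUnit (Bᵀ * B).det) :
    colSpaceProj B * B = B := by
  rw [colSpaceProj, Matrix.mul_assoc _ Bᵀ, Matrix.mul_assoc B, nonsing_inv_mul _ hB, Matrix.mul_one]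

end ColumnSpace

section Gram

variable {K : Type*} [Field K] [LinearOrder K] [IsStrictOrderedRing K] [DecidableEq r]

theorem isUnit_det_transpose_mul_self {B : Matrix m r K} (hB : Function.Injective B.mulVec) :
    IsUnit (Bᵀ * B).det := by
  rw [← isUnit_iff_isUnit_det, ← mulVec_injective_iff_isUnit]
  have hker := ker_mulVecLin_transpose_mul_self B
  rw [LinearMap.ker_eq_bot (f := B.mulVecLin) |>.mpr hB] at hker
  exact LinearMap.ker_eq_bot.mp hker

theorem exists_isUnit_det_transpose_mul_self_mul (A : Matrix m n K) :
    ∃ S : Matrix n (Fin A.rank) K, IsUnit ((A * S)ᵀ * (A * S)).det := by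
  classical
  obtain ⟨g, hg⟩ := A.mulVecLin.rangeRestrict.exists_rightInverse_of_surjective
    (LinearMap.range_rangeRestrict _)
  let e : (Fin A.rank → K) ≃ₗ[K] LinearMap.range A.mulVecLin :=
    LinearEquiv.ofFinrankEq _ _ (Module.finrank_fin_fun K)
  refine ⟨LinearMap.toMatrix' (g ∘ₗ e.toLinearMap), isUnit_det_transpose_mul_self ?_⟩
  have hAS : ∀ v, (A * LinearMap.toMatrix' (g ∘ₗ e.toLinearMap)) *ᵥ v = e v := fun v => by
    rw [← mulVec_mulVec, LinearMap.toMatrix'_mulVec]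
    exact congrArg Subtype.val (LinearMap.congr_fun hg (e v))
  intro v w hvw
  exact e.injective (Subtype.val_injective (by rw [← hAS, ← hAS, hvw]))

theorem colSpaceProj_mul_of_rank_eq {A : Matrix m n K} {S : Matrix n r K}
    (hG : IsUnit ((A * S)ᵀ * (A * S)).det) (hr : A.rank = Fintype.card r) :
    colSpaceProj (A * S) * A = A := by
  have hle : LinearMap.range (A * S).mulVecLin ≤ LinearMap.range A.mulVecLin := by
    rw [mulVecLin_mul]; exact LinearMap.range_comp_le_range _ _
  have hrank : (A * S).rank = A.rank := by
    rw [hr, ← rank_transpose_mul_self, rank_of_isUnit _ ((isUnit_iff_isUnit_det _).mpr hG)]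
  exact mul_eq_self_of_range_le (colSpaceProj_mul_self hG)
    (Submodule.eq_of_le_of_finrank_eq hle hrank).ge

end Gram

structure IsMoorePenroseInverse_s3 {R : Type*} [CommRing R] (A : Matrix m n R) (P : Matrix n m R) :
    Prop where
  mul_pinv_mul : A * P * A = A
  pinv_mul_pinv : P * A * P = P
  isSymm_mul_pinv : (A * P).IsSymm
  isSymm_pinv_mul : (P * A).IsSymm

namespace IsMoorePenroseInverse_s3

variable {R : Type*} [CommRing R] {A : Matrix m n R} {P : Matrix n m R}

theorem transpose_mul_mul_pinv (h : IsMoorePenroseInverse_s3 A P) : Aᵀ * (A * P) = Aᵀ := by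
  rw [← h.isSymm_mul_pinv.eq, ← transpose_mul, h.mul_pinv_mul]

theorem pinv_mul_mul_transpose (h : IsMoorePenroseInverse_s3 A P) : P * A * Aᵀ = Aᵀ := by
  rw [← h.isSymm_pinv_mul.eq, ← transpose_mul, ← Matrix.mul_assoc, h.mul_pinv_mul]

theorem mul_pinv_mul_transpose_pinv (h : IsMoorePenroseInverse_s3 A P) : A * P * Pᵀ = Pᵀ := by
  rw [← h.isSymm_mul_pinv.eq, ← transpose_mul, ← Matrix.mul_assoc, h.pinv_mul_pinv]

theorem transpose_mul_transpose_pinv (h : IsMoorePenroseInverse_s3 A P) : Aᵀ * Pᵀ = P * A := by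
  rw [← transpose_mul, h.isSymm_pinv_mul.eq]

theorem mul_pinv_eq (h : IsMoorePenroseInverse_s3 A P) {Q : Matrix m m R} (hQ : Q.IsSymm)
    (hQA : Q * A = A) (hAPQ : A * P * Q = Q) : A * P = Q :=
  calc A * P = (Q * A * P)ᵀ := by rw [hQA, h.isSymm_mul_pinv.eq]
    _ = A * P * Q := by rw [Matrix.mul_assoc, transpose_mul, hQ.eq, h.isSymm_mul_pinv.eq]
    _ = Q := hAPQ

theorem mul_pinv_eq_colSpaceProj {K : Type*} [Field K] [LinearOrder K] [IsStrictOrderedRing K]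
    [DecidableEq r] {A : Matrix m n K} {P : Matrix n m K} (h : IsMoorePenroseInverse_s3 A P)
    {S : Matrix n r K} (hG : IsUnit ((A * S)ᵀ * (A * S)).det) (hr : A.rank = Fintype.card r) :
    A * P = colSpaceProj (A * S) := by
  refine h.mul_pinv_eq (isSymm_colSpaceProj _) (colSpaceProj_mul_of_rank_eq hG hr) ?_
  simp only [colSpaceProj, ← Matrix.mul_assoc, h.mul_pinv_mul]

variable [DecidableEq m]

theorem mul_transpose_add_one_sub_mul_inverse (h : IsMoorePenroseInverse_s3 A P) :
    (A * Aᵀ + 1 - A * P) * (Pᵀ * P + 1 - A * P) = 1 := by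
  have hfactor : ∀ U V W : Matrix m m R, U * V = W → U * W = U → W * V = V → W * W = W →
      (U + 1 - W) * (V + 1 - W) = 1 := fun U V W e₁ e₂ e₃ e₄ => by
    linear_combination (norm := noncomm_ring) e₁ - e₂ - e₃ + e₄
  refine hfactor _ _ _ ?_ ?_ ?_ ?_
  · rw [Matrix.mul_assoc A, ← Matrix.mul_assoc Aᵀ, h.transpose_mul_transpose_pinv,
      h.pinv_mul_pinv]
  · rw [Matrix.mul_assoc, h.transpose_mul_mul_pinv]
  · rw [← Matrix.mul_assoc, h.mul_pinv_mul_transpose_pinv]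
  · rw [← Matrix.mul_assoc, h.mul_pinv_mul]

theorem isUnit_det_mul_transpose_add_one_sub_mul_pinv (h : IsMoorePenroseInverse_s3 A P) :
    IsUnit (A * Aᵀ + 1 - A * P).det :=
  isUnit_det_of_right_inverse h.mul_transpose_add_one_sub_mul_inverse

theorem pinv_eq_transpose_mul_inv (h : IsMoorePenroseInverse_s3 A P) :
    P = Aᵀ * (A * Aᵀ + 1 - A * P)⁻¹ := by
  have hPM : P * (A * Aᵀ + 1 - A * P) = Aᵀ := by
    rw [Matrix.mul_sub, Matrix.mul_add, Matrix.mul_one, ← Matrix.mul_assoc,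
      h.pinv_mul_mul_transpose, ← Matrix.mul_assoc, h.pinv_mul_pinv, add_sub_cancel_right]
  calc P = P * ((A * Aᵀ + 1 - A * P) * (A * Aᵀ + 1 - A * P)⁻¹) := by
        rw [mul_nonsing_inv _ h.isUnit_det_mul_transpose_add_one_sub_mul_pinv, Matrix.mul_one]
    _ = Aᵀ * (A * Aᵀ + 1 - A * P)⁻¹ := by rw [← Matrix.mul_assoc, hPM]

variable [DecidableEq n]

/-- `D` and `Q` play the roles of the derivatives of `A` and `P`: the hypotheses are the
differentiated Penrose equations. With `E = 1 - A P` and `F = 1 - P A`, each block of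
`Q = (P A + F) Q (A P + E)` is determined by them. -/
theorem eq_of_linearized (h : IsMoorePenroseInverse_s3 A P) {D : Matrix m n R} {Q : Matrix n m R}
    (h₁ : D * P * A + A * Q * A + A * P * D = D)
    (h₂ : Q * A * P + P * D * P + P * A * Q = Q)
    (h₃ : (D * P + A * Q).IsSymm) (h₄ : (Q * A + P * D).IsSymm) :
    Q = -(P * D * P) + P * Pᵀ * Dᵀ * (1 - A * P) + (1 - P * A) * Dᵀ * Pᵀ * P := by
  set E := 1 - A * P with hE
  set F := 1 - P * A with hF
  have hPE : P * E = 0 := by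
    rw [hE, Matrix.mul_sub, Matrix.mul_one, ← Matrix.mul_assoc, h.pinv_mul_pinv, sub_self]
  have hFP : F * P = 0 := by rw [hF, Matrix.sub_mul, Matrix.one_mul, h.pinv_mul_pinv, sub_self]
  have hAtE : Aᵀ * E = 0 := by
    rw [hE, Matrix.mul_sub, Matrix.mul_one, h.transpose_mul_mul_pinv, sub_self]
  have hFAt : F * Aᵀ = 0 := by
    rw [hF, Matrix.sub_mul, Matrix.one_mul, h.pinv_mul_mul_transpose, sub_self]
  have hPAQAP : P * (A * Q * A) * P = -(P * D * P) := by
    have hAQA : A * Q * A = D - D * P * A - A * P * D := by linear_combination (norm := abel) h₁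
    calc P * (A * Q * A) * P = P * D * P - P * D * (P * A * P) - P * A * P * D * P := by
          rw [hAQA]; simp only [Matrix.mul_sub, Matrix.sub_mul, Matrix.mul_assoc]
      _ = -(P * D * P) := by rw [h.pinv_mul_pinv]; abel
  have hAQE : A * Q * E = Pᵀ * Dᵀ * E := by
    have hAQ : A * Q = Pᵀ * Dᵀ + Qᵀ * Aᵀ - D * P := by
      rw [← transpose_mul, ← transpose_mul, ← transpose_add, h₃.eq]; abel
    calc A * Q * E = Pᵀ * Dᵀ * E + Qᵀ * (Aᵀ * E) - D * (P * E) := by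
          rw [hAQ]; simp only [Matrix.sub_mul, Matrix.add_mul, Matrix.mul_assoc]
      _ = Pᵀ * Dᵀ * E := by rw [hAtE, hPE]; simp
  have hFQA : F * (Q * A) = F * Dᵀ * Pᵀ := by
    have hQA : Q * A = Aᵀ * Qᵀ + Dᵀ * Pᵀ - P * D := by
      rw [← transpose_mul, ← transpose_mul, ← transpose_add, h₄.eq]; abel
    calc F * (Q * A) = F * Aᵀ * Qᵀ + F * Dᵀ * Pᵀ - F * P * D := by
          rw [hQA]; simp only [Matrix.mul_sub, Matrix.mul_add, Matrix.mul_assoc]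
      _ = F * Dᵀ * Pᵀ := by rw [hFAt, hFP]; simp
  have hFQE : F * Q * E = 0 := by
    calc F * Q * E = F * Q * A * (P * E) + F * P * D * (P * E) + F * P * (A * Q * E) := by
          conv_lhs => rw [← h₂]
          simp only [Matrix.add_mul, Matrix.mul_add, Matrix.mul_assoc]
      _ = 0 := by rw [hPE, hFP]; simp
  calc Q = (P * A + F) * Q * (A * P + E) := by simp [hE, hF]
    _ = P * (A * Q * A) * P + P * (A * Q * E) + F * (Q * A) * P + F * Q * E := by
        simp only [Matrix.add_mul, Matrix.mul_add, Matrix.mul_assoc]; abel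
    _ = _ := by rw [hPAQAP, hAQE, hFQA, hFQE]; simp only [Matrix.mul_assoc, add_zero]

end IsMoorePenroseInverse_s3

end Matrix

section Pseudoinverse

variable {m n : Type*} [Fintype m] [Fintype n] [DecidableEq m] {E : Type*} [NormedAddCommGroup E]

theorem differentiableAt_of_isMoorePenroseInverse [NormedSpace ℝ E] {A : E → Matrix m n ℝ}
    {P : E → Matrix n m ℝ} {x₀ : E} (hP : ∀ᶠ x in 𝓝 x₀, (A x).IsMoorePenroseInverse_s3 (P x))
    (hA : DifferentiableAt ℝ A x₀) (hrank : ∀ᶠ x in 𝓝 x₀, (A x).rank = (A x₀).rank) :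
    DifferentiableAt ℝ P x₀ := by
  obtain ⟨S, hS⟩ := (A x₀).exists_isUnit_det_transpose_mul_self_mul
  have hB : DifferentiableAt ℝ (fun x => A x * S) x₀ := hA.matrix_mul (differentiableAt_const S)
  have hG : DifferentiableAt ℝ (fun x => (A x * S)ᵀ * (A x * S)) x₀ :=
    hB.matrix_transpose.matrix_mul hB
  have hQ : DifferentiableAt ℝ (fun x => colSpaceProj (A x * S)) x₀ :=
    (hB.matrix_mul (hG.matrix_inv hS)).matrix_mul hB.matrix_transpose
  have hQ₀ : A x₀ * P x₀ = colSpaceProj (A x₀ * S) :=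
    hP.self_of_nhds.mul_pinv_eq_colSpaceProj hS (Fintype.card_fin _).symm
  have hM : DifferentiableAt ℝ (fun x => (A x * (A x)ᵀ + 1 - colSpaceProj (A x * S))⁻¹) x₀ := by
    refine (((hA.matrix_mul hA.matrix_transpose).add_const 1).fun_sub hQ).matrix_inv ?_
    rw [← hQ₀]
    exact hP.self_of_nhds.isUnit_det_mul_transpose_add_one_sub_mul_pinv
  have hGdet : ∀ᶠ x in 𝓝 x₀, ((A x * S)ᵀ * (A x * S)).det ≠ 0 :=
    (contDiff_matrix_det.continuous.continuousAt.comp hG.continuousAt).eventually_ne hS.ne_zero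
  refine (hA.matrix_transpose.matrix_mul hM).congr_of_eventuallyEq ?_
  filter_upwards [hP, hrank, hGdet] with x hPx hrx hGx
  rw [← hPx.mul_pinv_eq_colSpaceProj hGx.isUnit (hrx.trans (Fintype.card_fin _).symm)]
  exact hPx.pinv_eq_transpose_mul_inv

theorem fderiv_apply_of_isMoorePenroseInverse {𝕜 : Type*} [NontriviallyNormedField 𝕜]
    [CompleteSpace 𝕜] [NormedSpace 𝕜 E] [DecidableEq n] {A : E → Matrix m n 𝕜}
    {P : E → Matrix n m 𝕜} {x₀ : E} (hP : ∀ᶠ x in 𝓝 x₀, (A x).IsMoorePenroseInverse_s3 (P x))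
    (hA : DifferentiableAt 𝕜 A x₀) (hPd : DifferentiableAt 𝕜 P x₀) (v : E) :
    fderiv 𝕜 P x₀ v =
      -(P x₀ * fderiv 𝕜 A x₀ v * P x₀)
      + P x₀ * (P x₀)ᵀ * (fderiv 𝕜 A x₀ v)ᵀ * (1 - A x₀ * P x₀)
      + (1 - P x₀ * A x₀) * (fderiv 𝕜 A x₀ v)ᵀ * (P x₀)ᵀ * P x₀ := by
  refine hP.self_of_nhds.eq_of_linearized ?_ ?_ ?_ ?_
  · have e := congrArg (· v) (EventuallyEq.fderiv_eq (𝕜 := 𝕜) (f₁ := fun x => A x * P x * A x)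
      (hP.mono fun x hx => hx.mul_pinv_mul))
    simpa only [fderiv_matrix_mul (hA.matrix_mul hPd) hA, fderiv_matrix_mul hA hPd,
      Matrix.add_mul] using e
  · have e := congrArg (· v) (EventuallyEq.fderiv_eq (𝕜 := 𝕜) (f₁ := fun x => P x * A x * P x)
      (hP.mono fun x hx => hx.pinv_mul_pinv))
    simpa only [fderiv_matrix_mul (hPd.matrix_mul hA) hPd, fderiv_matrix_mul hPd hA,
      Matrix.add_mul] using e
  · have e := congrArg (· v) (EventuallyEq.fderiv_eq (𝕜 := 𝕜) (f₁ := fun x => (A x * P x)ᵀ)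
      (hP.mono fun x hx => hx.isSymm_mul_pinv))
    simpa only [IsSymm, fderiv_matrix_transpose, fderiv_matrix_mul hA hPd] using e
  · have e := congrArg (· v) (EventuallyEq.fderiv_eq (𝕜 := 𝕜) (f₁ := fun x => (P x * A x)ᵀ)
      (hP.mono fun x hx => hx.isSymm_pinv_mul))
    simpa only [IsSymm, fderiv_matrix_transpose, fderiv_matrix_mul hPd hA] using e

end Pseudoinverse

/-- Differentiability of the Moore–Penrose pseudoinverse under local rank constancy,
together with the explicit formula for its derivative. -/
theorem pseudoinverse_differentiableAt
    {d m n : ℕ}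
    (A : (Fin d → ℝ) → Matrix (Fin m) (Fin n) ℝ)
    (P : (Fin d → ℝ) → Matrix (Fin n) (Fin m) ℝ)
    (hP : ∀ x, A x * P x * A x = A x ∧ P x * A x * P x = P x ∧
      (A x * P x)ᵀ = A x * P x ∧ (P x * A x)ᵀ = P x * A x)
    (x₀ : Fin d → ℝ)
    (hA : DifferentiableAt ℝ A x₀)
    (hrank : ∀ᶠ x in nhds x₀, (A x).rank = (A x₀).rank) :
    DifferentiableAt ℝ P x₀ ∧
      ∀ h : Fin d → ℝ,
        fderiv ℝ P x₀ h =
          - (P x₀ * fderiv ℝ A x₀ h * P x₀)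
          + P x₀ * (P x₀)ᵀ * (fderiv ℝ A x₀ h)ᵀ * (1 - A x₀ * P x₀)
          + (1 - P x₀ * A x₀) * (fderiv ℝ A x₀ h)ᵀ * (P x₀)ᵀ * P x₀ := by
  have hMP : ∀ᶠ x in 𝓝 x₀, (A x).IsMoorePenroseInverse_s3 (P x) :=
    Eventually.of_forall fun x =>
      let ⟨h₁, h₂, h₃, h₄⟩ := hP x
      ⟨h₁, h₂, h₃, h₄⟩
  have hPd := differentiableAt_of_isMoorePenroseInverse hMP hA hrank
  exact ⟨hPd, fderiv_apply_of_isMoorePenroseInverse hMP hA hPd⟩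
end

section
/- Let A ∈ ℝ^{m×n}, μ > 0, and ν ∈ ℕ, and suppose det(A Aᵀ) > 0. Define λ > 0 by λ² = μ² / det(A Aᵀ)^ν. Then the operator norm of the damped pseudoinverse satisfies ‖Aᵀ (A Aᵀ + λ² I_m)⁻¹‖ ≤ ‖A‖^{ν m} / (2μ). -/
/-!
Write `S = AAᴴ + λ²I` and `B = AᴴS⁻¹`. Since `S` is Hermitian,
`BᴴB = S⁻¹(S - λ²I)S⁻¹ = S⁻¹ - λ²S⁻²`, hence `I - 4λ²BᴴB = (I - 2λ²S⁻¹)²` is positive semidefinite and `‖B‖ ≤ 1/(2λ)`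
(on a singular value `σ` of `A` this is `σ/(σ² + λ²) ≤ 1/(2λ)`).
The eigenvalues of the positive semidefinite matrix `AAᵀ` are at most `‖AAᵀ‖ = ‖A‖²`, so
`det(AAᵀ) ≤ ‖A‖^{2m}`, and therefore `λ = μ / det(AAᵀ)^{ν/2} ≥ μ / ‖A‖^{νm}`.
-/

open Matrix
open scoped Matrix.Norms.L2Operator ComplexOrder

lemma EuclideanSpace.norm_sq_eq_re_star_dotProduct {𝕜 : Type*} [RCLike 𝕜] {n : Type*}
    [Fintype n] (x : EuclideanSpace 𝕜 n) : ‖x‖ ^ 2 = RCLike.re (star x.ofLp ⬝ᵥ x.ofLp) := by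
  rw [← inner_self_eq_norm_sq (𝕜 := 𝕜), EuclideanSpace.inner_eq_star_dotProduct, dotProduct_comm]

namespace Matrix

variable {𝕜 : Type*} [RCLike 𝕜] {m n : Type*} [Fintype m] [Fintype n]

section

variable [DecidableEq n]

lemma l2_opNorm_le_of_posSemidef_sub {B : Matrix m n 𝕜} {c : ℝ} (hc : 0 ≤ c)
    (h : (c ^ 2 • 1 - Bᴴ * B).PosSemidef) : ‖B‖ ≤ c := by
  rw [l2_opNorm_def]
  refine ContinuousLinearMap.opNorm_le_bound _ hc fun x => ?_
  refine (pow_le_pow_iff_left₀ (norm_nonneg _) (by positivity) two_ne_zero).mp ?_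
  have hx := h.re_dotProduct_nonneg x.ofLp
  rw [sub_mulVec, dotProduct_sub, smul_mulVec, one_mulVec, dotProduct_smul, ← mulVec_mulVec,
    dotProduct_mulVec, ← star_mulVec, map_sub, RCLike.smul_re] at hx
  rw [mul_pow, EuclideanSpace.norm_sq_eq_re_star_dotProduct,
    EuclideanSpace.norm_sq_eq_re_star_dotProduct]
  simpa [sub_nonneg] using hx

lemma IsHermitian.abs_eigenvalues_le_l2_opNorm {M : Matrix n n 𝕜} (hM : M.IsHermitian) (i : n) :
    |hM.eigenvalues i| ≤ ‖M‖ := by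
  have hv : ‖hM.eigenvectorBasis i‖ = 1 := hM.eigenvectorBasis.orthonormal.1 i
  simpa [hM.mulVec_eigenvectorBasis, norm_smul, hv] using
    M.l2_opNorm_mulVec (hM.eigenvectorBasis i)

lemma PosSemidef.det_le_l2_opNorm_pow {M : Matrix n n 𝕜} (hM : M.PosSemidef) :
    M.det ≤ (‖M‖ ^ Fintype.card n : ℝ) := by
  rw [hM.isHermitian.det_eq_prod_eigenvalues, ← RCLike.ofReal_prod, RCLike.ofReal_le_ofReal,
    ← Finset.card_univ, ← Finset.prod_const]
  exact Finset.prod_le_prod (fun i _ => hM.eigenvalues_nonneg i)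
    fun i _ => (le_abs_self _).trans (hM.isHermitian.abs_eigenvalues_le_l2_opNorm i)

end

lemma l2_opNorm_mul_conjTranspose_self [DecidableEq m] [DecidableEq n] (A : Matrix m n 𝕜) :
    ‖A * Aᴴ‖ = ‖A‖ * ‖A‖ := by
  simpa [l2_opNorm_conjTranspose] using l2_opNorm_conjTranspose_mul_self Aᴴ

section DampedPinv

variable [DecidableEq m]

noncomputable def dampedPinv (A : Matrix m n 𝕜) (lam : ℝ) : Matrix n m 𝕜 :=
  Aᴴ * (A * Aᴴ + lam ^ 2 • 1)⁻¹

lemma posDef_mul_conjTranspose_add_sq_smul_one (A : Matrix m n 𝕜) {lam : ℝ} (hlam : lam ≠ 0) :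
    (A * Aᴴ + lam ^ 2 • 1).PosDef :=
  PosDef.posSemidef_add (posSemidef_self_mul_conjTranspose A) (PosDef.one.smul (by positivity))

lemma conjTranspose_dampedPinv_mul_self (A : Matrix m n 𝕜) {lam : ℝ} (hlam : lam ≠ 0) :
    (dampedPinv A lam)ᴴ * dampedPinv A lam =
      (A * Aᴴ + lam ^ 2 • 1)⁻¹ -
        lam ^ 2 • ((A * Aᴴ + lam ^ 2 • 1)⁻¹ * (A * Aᴴ + lam ^ 2 • 1)⁻¹) := by
  set S := A * Aᴴ + lam ^ 2 • 1
  have hS := posDef_mul_conjTranspose_add_sq_smul_one A hlam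
  have hdet : IsUnit S.det := (isUnit_iff_isUnit_det S).mp hS.isUnit
  calc (dampedPinv A lam)ᴴ * dampedPinv A lam = S⁻¹ * (S - lam ^ 2 • 1) * S⁻¹ := by
        simp only [dampedPinv, conjTranspose_mul, conjTranspose_conjTranspose,
          hS.isHermitian.inv.eq, S, add_sub_cancel_right, Matrix.mul_assoc]
    _ = S⁻¹ - lam ^ 2 • (S⁻¹ * S⁻¹) := by
        rw [Matrix.mul_sub, nonsing_inv_mul S hdet, Matrix.sub_mul, one_mul, Matrix.mul_smul,
          mul_one, Matrix.smul_mul]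

theorem l2_opNorm_dampedPinv_le (A : Matrix m n 𝕜) {lam : ℝ} (hlam : 0 < lam) :
    ‖dampedPinv A lam‖ ≤ (2 * lam)⁻¹ := by
  refine l2_opNorm_le_of_posSemidef_sub (by positivity) ?_
  set T := (A * Aᴴ + lam ^ 2 • 1)⁻¹
  have hT : Tᴴ = T := (posDef_mul_conjTranspose_add_sq_smul_one A hlam.ne').isHermitian.inv
  have hsq : (2 * lam)⁻¹ ^ 2 • 1 - (dampedPinv A lam)ᴴ * dampedPinv A lam =
      (2 * lam)⁻¹ ^ 2 • ((1 - (2 * lam ^ 2) • T)ᴴ * (1 - (2 * lam ^ 2) • T)) := by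
    rw [conjTranspose_dampedPinv_mul_self A hlam.ne', conjTranspose_sub, conjTranspose_one,
      conjTranspose_smul, hT, star_trivial]
    simp only [sub_mul, mul_sub, smul_mul_assoc, mul_smul_comm, one_mul, mul_one]
    have hscalar : (2 * lam)⁻¹ ^ 2 * (4 * lam ^ 2) = 1 := by field_simp; ring
    linear_combination (norm := module) hscalar • T - (lam ^ 2 * hscalar) • (T * T)
  rw [hsq]
  exact (posSemidef_conjTranspose_mul_self _).smul (by positivity)

end DampedPinv

end Matrix

/-- For `A ∈ ℝ^{m×n}`, `μ > 0`, `ν ∈ ℕ` with `det (A Aᵀ) > 0`, the damped pseudoinverse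
with damping `λ² = μ² / det(A Aᵀ)^ν` has (ℓ²-)operator norm at most `‖A‖^{νm}/(2μ)`. -/
theorem damped_pseudoinverse_opNorm_le_of_det_pos
    {m n : ℕ} (A : Matrix (Fin m) (Fin n) ℝ) (μ : ℝ) (hμ : 0 < μ) (ν : ℕ)
    (hdet : 0 < (A * Aᵀ).det)
    (lam : ℝ) (hlam : 0 < lam) (hlam2 : lam ^ 2 = μ ^ 2 / (A * Aᵀ).det ^ ν) :
    ‖Aᵀ * (A * Aᵀ + lam ^ 2 • (1 : Matrix (Fin m) (Fin m) ℝ))⁻¹‖ ≤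
      ‖A‖ ^ (ν * m) / (2 * μ) := by
  have hpinv : ‖Aᵀ * (A * Aᵀ + lam ^ 2 • 1)⁻¹‖ ≤ (2 * lam)⁻¹ := by
    simpa [dampedPinv, conjTranspose_eq_transpose_of_trivial] using l2_opNorm_dampedPinv_le A hlam
  have hdet_le : (A * Aᵀ).det ≤ ‖A‖ ^ (2 * m) := by
    have h := (posSemidef_self_mul_conjTranspose A).det_le_l2_opNorm_pow
    rw [l2_opNorm_mul_conjTranspose_self, ← sq, ← pow_mul] at h
    simpa [conjTranspose_eq_transpose_of_trivial] using h
  have hμ_le : μ ≤ lam * ‖A‖ ^ (ν * m) := by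
    refine (pow_le_pow_iff_left₀ hμ.le (by positivity) two_ne_zero).mp ?_
    calc μ ^ 2 = lam ^ 2 * (A * Aᵀ).det ^ ν := by rw [hlam2]; field_simp
      _ ≤ lam ^ 2 * (‖A‖ ^ (2 * m)) ^ ν := by gcongr
      _ = (lam * ‖A‖ ^ (ν * m)) ^ 2 := by ring
  calc _ ≤ (2 * lam)⁻¹ := hpinv
    _ ≤ ‖A‖ ^ (ν * m) / (2 * μ) := by
      rw [inv_eq_one_div, div_le_div_iff₀ (by positivity) (by positivity)]
      linarith
end

section
/- Fix μ > 0 and ν ∈ ℕ. For every A ∈ ℝ^{m×n} one has det(A Aᵀ) ≥ 0, the matrix det(A Aᵀ)^ν · A Aᵀ + μ² I_m is invertible, and the map F : ℝ^{m×n} → ℝ^{n×m} defined by F(A) = det(A Aᵀ)^ν · Aᵀ · (det(A Aᵀ)^ν · A Aᵀ + μ² I_m)⁻¹ is infinitely differentiable (C^∞) on the whole space ℝ^{m×n}. -/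
open Matrix

attribute [local instance] Matrix.normedAddCommGroup Matrix.normedSpace

section Aux

variable {E : Type*} [NormedAddCommGroup E] [NormedSpace ℝ E]

private lemma edps_contDiff_of_entries {p q : ℕ} {M : E → Matrix (Fin p) (Fin q) ℝ}
    (h : ∀ i j, ContDiff ℝ (⊤ : ℕ∞) fun x => M x i j) : ContDiff ℝ (⊤ : ℕ∞) M :=
  contDiff_pi.2 fun i => contDiff_pi.2 fun j => h i j

private lemma edps_contDiff_entry {p q : ℕ} {M : E → Matrix (Fin p) (Fin q) ℝ}
    (h : ContDiff ℝ (⊤ : ℕ∞) M) (i : Fin p) (j : Fin q) :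
    ContDiff ℝ (⊤ : ℕ∞) fun x => M x i j :=
  ((contDiff_pi.1 ((contDiff_pi.1 h) i)) j)

private lemma edps_contDiff_prod {ι : Type*} (s : Finset ι) {f : ι → E → ℝ}
    (h : ∀ i ∈ s, ContDiff ℝ (⊤ : ℕ∞) (f i)) :
    ContDiff ℝ (⊤ : ℕ∞) fun x => ∏ i ∈ s, f i x := by
  classical
  induction s using Finset.induction with
  | empty => simpa using contDiff_const
  | @insert a s ha ih =>
    simp_rw [Finset.prod_insert ha]
    exact (h a (Finset.mem_insert_self a s)).mul
      (ih fun i hi => h i (Finset.mem_insert_of_mem hi))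

private lemma edps_contDiff_det {p : ℕ} {M : E → Matrix (Fin p) (Fin p) ℝ}
    (h : ∀ i j, ContDiff ℝ (⊤ : ℕ∞) fun x => M x i j) :
    ContDiff ℝ (⊤ : ℕ∞) fun x => (M x).det := by
  simp_rw [Matrix.det_apply']
  exact ContDiff.sum fun σ _ =>
    contDiff_const.mul (edps_contDiff_prod Finset.univ fun i _ => h (σ i) i)

end Aux

/-- For fixed `μ > 0` and `ν ∈ ℕ`: for every `A ∈ ℝ^{m×n}` one has `det (A Aᵀ) ≥ 0`, the
matrix `det(A Aᵀ)^ν • A Aᵀ + μ² I` is invertible, and the extended damped pseudoinverse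
`A ↦ det(A Aᵀ)^ν • Aᵀ • (det(A Aᵀ)^ν • A Aᵀ + μ² I)⁻¹` is `C^∞` on all of `ℝ^{m×n}`. -/
theorem extended_damped_pseudoinverse_smooth
    {m n : ℕ} (μ : ℝ) (hμ : 0 < μ) (ν : ℕ) :
    (∀ A : Matrix (Fin m) (Fin n) ℝ, 0 ≤ (A * Aᵀ).det) ∧
    (∀ A : Matrix (Fin m) (Fin n) ℝ,
      IsUnit ((A * Aᵀ).det ^ ν • (A * Aᵀ) + μ ^ 2 • (1 : Matrix (Fin m) (Fin m) ℝ))) ∧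
    ContDiff ℝ (⊤ : ℕ∞) (fun A : Matrix (Fin m) (Fin n) ℝ =>
      (A * Aᵀ).det ^ ν • Aᵀ *
        ((A * Aᵀ).det ^ ν • (A * Aᵀ) + μ ^ 2 • (1 : Matrix (Fin m) (Fin m) ℝ))⁻¹) := by
  -- det nonneg
  have hdet0 : ∀ A : Matrix (Fin m) (Fin n) ℝ, 0 ≤ (A * Aᵀ).det := by
    intro A
    have hps : (A * Aᵀ).PosSemidef := by
      have := Matrix.posSemidef_self_mul_conjTranspose A
      simpa using this
    exact hps.det_nonneg
  -- pos def
  have hposdef : ∀ A : Matrix (Fin m) (Fin n) ℝ,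
      ((A * Aᵀ).det ^ ν • (A * Aᵀ) + μ ^ 2 • (1 : Matrix (Fin m) (Fin m) ℝ)).PosDef := by
    intro A
    have hps : (A * Aᵀ).PosSemidef := by
      have := Matrix.posSemidef_self_mul_conjTranspose A
      simpa using this
    have hc : (0 : ℝ) ≤ (A * Aᵀ).det ^ ν := pow_nonneg (hdet0 A) ν
    have hsmul : ((A * Aᵀ).det ^ ν • (A * Aᵀ)).PosSemidef := by
      refine ⟨?_, ?_⟩
      · unfold Matrix.IsHermitian
        rw [Matrix.conjTranspose_smul, hps.1]
        simp
      · intro x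
        have h2 := mul_nonneg hc (hps.2 x)
        simp only [Finsupp.mul_sum] at h2
        simpa [Matrix.smul_apply, smul_eq_mul, mul_assoc, mul_left_comm] using h2
    have hone : ((μ ^ 2) • (1 : Matrix (Fin m) (Fin m) ℝ)).PosDef := by
      rw [Matrix.smul_one_eq_diagonal]
      exact Matrix.PosDef.diagonal fun i => pow_pos hμ 2
    exact Matrix.PosDef.posSemidef_add hsmul hone
  refine ⟨hdet0, fun A => ((hposdef A).isUnit), ?_⟩
  -- smoothness
  set M : Matrix (Fin m) (Fin n) ℝ → Matrix (Fin m) (Fin m) ℝ :=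
    fun A => (A * Aᵀ).det ^ ν • (A * Aᵀ) + μ ^ 2 • (1 : Matrix (Fin m) (Fin m) ℝ) with hM
  -- entries of A * Aᵀ are smooth
  have hAAT : ∀ i j : Fin m, ContDiff ℝ (⊤ : ℕ∞) fun A : Matrix (Fin m) (Fin n) ℝ => (A * Aᵀ) i j := by
    intro i j
    simp_rw [Matrix.mul_apply, Matrix.transpose_apply]
    exact ContDiff.sum fun k _ =>
      (edps_contDiff_entry contDiff_id i k).mul (edps_contDiff_entry contDiff_id j k)
  have hd : ContDiff ℝ (⊤ : ℕ∞) fun A : Matrix (Fin m) (Fin n) ℝ => (A * Aᵀ).det :=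
    edps_contDiff_det hAAT
  have hc : ContDiff ℝ (⊤ : ℕ∞) fun A : Matrix (Fin m) (Fin n) ℝ => (A * Aᵀ).det ^ ν := hd.pow ν
  have hMent : ∀ i j : Fin m, ContDiff ℝ (⊤ : ℕ∞) fun A => M A i j := by
    intro i j
    have : (fun A => M A i j)
        = fun A : Matrix (Fin m) (Fin n) ℝ =>
          (A * Aᵀ).det ^ ν * (A * Aᵀ) i j + μ ^ 2 * (1 : Matrix (Fin m) (Fin m) ℝ) i j := by
      funext A; simp [hM, Matrix.add_apply, Matrix.smul_apply, smul_eq_mul]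
    rw [this]
    exact (hc.mul (hAAT i j)).add contDiff_const
  have hdM : ContDiff ℝ (⊤ : ℕ∞) fun A => (M A).det := edps_contDiff_det hMent
  have hdMne : ∀ A, (M A).det ≠ 0 := fun A => (hposdef A).det_pos.ne'
  have hdMinv : ContDiff ℝ (⊤ : ℕ∞) fun A => ((M A).det)⁻¹ := hdM.inv hdMne
  have hadj : ∀ k j : Fin m, ContDiff ℝ (⊤ : ℕ∞) fun A => (M A).adjugate k j := by
    intro k j
    simp_rw [Matrix.adjugate_apply]
    refine edps_contDiff_det ?_
    intro a b
    simp_rw [Matrix.updateRow_apply]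
    by_cases hab : a = j
    · simp only [hab, if_pos rfl]
      exact contDiff_const
    · simp only [hab, if_false]
      exact hMent a b
  have hinv : ∀ k j : Fin m, ContDiff ℝ (⊤ : ℕ∞) fun A => (M A)⁻¹ k j := by
    intro k j
    have : (fun A => (M A)⁻¹ k j) = fun A => ((M A).det)⁻¹ * (M A).adjugate k j := by
      funext A
      rw [Matrix.inv_def, Matrix.smul_apply, smul_eq_mul, Ring.inverse_eq_inv']
    rw [this]
    exact hdMinv.mul (hadj k j)
  refine edps_contDiff_of_entries fun i j => ?_
  have : (fun A : Matrix (Fin m) (Fin n) ℝ =>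
        ((A * Aᵀ).det ^ ν • Aᵀ *
          ((A * Aᵀ).det ^ ν • (A * Aᵀ) + μ ^ 2 • (1 : Matrix (Fin m) (Fin m) ℝ))⁻¹) i j)
      = fun A => ∑ k, ((A * Aᵀ).det ^ ν * A k i) * (M A)⁻¹ k j := by
    funext A
    rw [hM, Matrix.mul_apply]
    exact Finset.sum_congr rfl fun k _ => by
      rw [Matrix.smul_apply, Matrix.transpose_apply, smul_eq_mul]
  rw [this]
  exact ContDiff.sum fun k _ =>
    (hc.mul (edps_contDiff_entry contDiff_id k i)).mul (hinv k j)
end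

section
/- In the CMBS setting, the collection of all CMBSs at x₀ is a partition of {1,…,n}: distinct CMBSs at x₀ are disjoint, and every index i ∈ {1,…,n} belongs to some CMBS at x₀. -/
open Matrix

/-- `P_S(x) = ∑_{i ∈ S} ĵ_i(x) ĵ_i(x)ᵀ`, the projector-valued function
associated with a subset `S` of the pointwise orthonormal frame `ĵ`. -/
def projSum {X : Type*} {n : ℕ} (j : Fin n → X → (Fin n → ℝ))
    (S : Finset (Fin n)) (x : X) : Matrix (Fin n) (Fin n) ℝ :=
  ∑ i ∈ S, vecMulVec (j i x) (j i x)

/-- `S` is a continuous minimum basis subset (CMBS) at `x₀`: `S` is nonempty, `P_S` is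
continuous at `x₀`, and no nonempty proper subset `T ⊊ S` has `P_T` continuous at `x₀`. -/
def IsCMBS {X : Type*} [TopologicalSpace X] {n : ℕ}
    (j : Fin n → X → (Fin n → ℝ)) (x₀ : X) (S : Finset (Fin n)) : Prop :=
  S.Nonempty ∧ ContinuousAt (projSum j S) x₀ ∧
    ∀ T : Finset (Fin n), T.Nonempty → T ⊂ S → ¬ ContinuousAt (projSum j T) x₀

/-!
The index sets `S` with `P_S` continuous at `x₀` form a Boolean algebra of sets: orthonormality
gives `P_S P_T = P_{S ∩ T}` and `P_{S \ T} = P_S - P_{S ∩ T}`, and `P_univ = 1`. The CMBSs are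
its atoms, i.e. its minimal nonempty members. Two atoms that meet contain their intersection,
hence coincide. For an index `i`, a minimal member `M` containing `i` is an atom: a nonempty
member `T ⊆ M` either contains `i`, so `T = M`, or misses it, and then `M \ T` is a member
containing `i`, so `T = ∅`.
-/

open Finset

section MinimalNonempty

variable {α : Type*} [DecidableEq α] {p : Finset α → Prop}

theorem disjoint_of_minimal_nonempty_of_inter_closed
    (hinter : ∀ S T, p S → p T → p (S ∩ T)) {S T : Finset α}
    (hS : Minimal (fun U ↦ U.Nonempty ∧ p U) S) (hT : Minimal (fun U ↦ U.Nonempty ∧ p U) T)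
    (hne : S ≠ T) : Disjoint S T := by
  by_contra hST
  have hmeet : (S ∩ T).Nonempty ∧ p (S ∩ T) :=
    ⟨not_disjoint_iff_nonempty_inter.mp hST, hinter S T hS.prop.2 hT.prop.2⟩
  exact hne ((hS.eq_of_le hmeet inter_subset_left).symm.trans
    (hT.eq_of_le hmeet inter_subset_right))

theorem exists_minimal_nonempty_mem_of_sdiff_closed
    (hsdiff : ∀ S T, p S → p T → p (S \ T)) {S₀ : Finset α} (h₀ : p S₀) {i : α}
    (hi : i ∈ S₀) : ∃ S, Minimal (fun U ↦ U.Nonempty ∧ p U) S ∧ i ∈ S := by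
  obtain ⟨M, -, hM⟩ := exists_minimal_le_of_wellFoundedLT (fun U ↦ p U ∧ i ∈ U) S₀ ⟨h₀, hi⟩
  obtain ⟨hpM, hiM⟩ := hM.prop
  refine ⟨M, ⟨⟨⟨i, hiM⟩, hpM⟩, fun T ⟨⟨t, htT⟩, hpT⟩ hTM ↦ ?_⟩, hiM⟩
  by_cases hiT : i ∈ T
  · exact hM.2 ⟨hpT, hiT⟩ hTM
  · have hM_sdiff : M ⊆ M \ T := hM.2 ⟨hsdiff M T hpM hpT, mem_sdiff.2 ⟨hiM, hiT⟩⟩ sdiff_subset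
    exact absurd htT (mem_sdiff.1 (hM_sdiff (hTM htT))).2

end MinimalNonempty

section projSum

variable {X : Type*} {n : ℕ} {j : Fin n → X → (Fin n → ℝ)}

theorem projSum_mul_projSum
    (horth : ∀ x, ∀ i k : Fin n, j i x ⬝ᵥ j k x = if i = k then 1 else 0)
    (S T : Finset (Fin n)) (x : X) :
    projSum j S x * projSum j T x = projSum j (S ∩ T) x := by
  simp only [projSum, sum_mul_sum, vecMulVec_mul_vecMulVec, horth, ite_smul, one_smul,
    zero_smul, apply_ite, vecMulVec_zero, sum_ite_eq, sum_ite_mem]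

theorem projSum_univ
    (horth : ∀ x, ∀ i k : Fin n, j i x ⬝ᵥ j k x = if i = k then 1 else 0) (x : X) :
    projSum j univ x = 1 := by
  let M : Matrix (Fin n) (Fin n) ℝ := of fun i ↦ j i x
  have hMMt : M * Mᵀ = 1 := by
    ext i k
    simpa [mul_apply, one_apply, dotProduct, M] using horth x i k
  have hMtM : Mᵀ * M = 1 := mul_eq_one_comm.mp hMMt
  ext a b
  simpa [projSum, Matrix.sum_apply, vecMulVec_apply, mul_apply, M] using
    congr_fun₂ hMtM a b

theorem projSum_sdiff (S T : Finset (Fin n)) (x : X) :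
    projSum j (S \ T) x = projSum j S x - projSum j (S ∩ T) x := by
  rw [← sdiff_inter_self_left, projSum, sum_sdiff_eq_sub inter_subset_left]
  rfl

variable [TopologicalSpace X] {x₀ : X} {S T : Finset (Fin n)}

theorem continuousAt_projSum_inter
    (horth : ∀ x, ∀ i k : Fin n, j i x ⬝ᵥ j k x = if i = k then 1 else 0)
    (hS : ContinuousAt (projSum j S) x₀) (hT : ContinuousAt (projSum j T) x₀) :
    ContinuousAt (projSum j (S ∩ T)) x₀ := by
  have hprod : projSum j (S ∩ T) = projSum j S * projSum j T :=
    funext fun x ↦ (projSum_mul_projSum horth S T x).symm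
  exact hprod ▸ hS.mul hT

theorem continuousAt_projSum_sdiff
    (horth : ∀ x, ∀ i k : Fin n, j i x ⬝ᵥ j k x = if i = k then 1 else 0)
    (hS : ContinuousAt (projSum j S) x₀) (hT : ContinuousAt (projSum j T) x₀) :
    ContinuousAt (projSum j (S \ T)) x₀ := by
  have hdiff : projSum j (S \ T) = projSum j S - projSum j (S ∩ T) :=
    funext (projSum_sdiff S T)
  exact hdiff ▸ hS.sub (continuousAt_projSum_inter horth hS hT)

theorem isCMBS_iff_minimal :
    IsCMBS j x₀ S ↔ Minimal (fun T ↦ T.Nonempty ∧ ContinuousAt (projSum j T) x₀) S := by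
  rw [minimal_iff_forall_lt, IsCMBS]
  simp only [not_and]
  tauto

end projSum

theorem cmbs_partition_general
    {X : Type*} [NormedAddCommGroup X]
    {n : ℕ} (j : Fin n → X → (Fin n → ℝ)) (x₀ : X)
    (horth : ∀ x, ∀ i k : Fin n, j i x ⬝ᵥ j k x = if i = k then 1 else 0) :
    (∀ S S' : Finset (Fin n), IsCMBS j x₀ S → IsCMBS j x₀ S' → S ≠ S' →
      Disjoint S S') ∧
    (∀ i : Fin n, ∃ S : Finset (Fin n), IsCMBS j x₀ S ∧ i ∈ S) := by
  simp only [isCMBS_iff_minimal]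
  have hcont_univ : ContinuousAt (projSum j univ) x₀ := by
    rw [funext (projSum_univ horth)]
    exact continuousAt_const
  exact ⟨fun S S' ↦ disjoint_of_minimal_nonempty_of_inter_closed
      fun _ _ ↦ continuousAt_projSum_inter horth,
    fun i ↦ exists_minimal_nonempty_mem_of_sdiff_closed
      (fun _ _ ↦ continuousAt_projSum_sdiff horth) hcont_univ (mem_univ i)⟩

/-- The collection of all CMBSs at `x₀` is a partition of `{1,…,n}`: distinct CMBSs are
disjoint and every index belongs to some CMBS. -/
theorem cmbs_partition
    {X : Type*} [NormedAddCommGroup X] [NormedSpace ℝ X]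
    {n : ℕ} (j : Fin n → X → (Fin n → ℝ)) (x₀ : X)
    (horth : ∀ x, ∀ i k : Fin n, j i x ⬝ᵥ j k x = if i = k then 1 else 0) :
    (∀ S S' : Finset (Fin n), IsCMBS j x₀ S → IsCMBS j x₀ S' → S ≠ S' →
      Disjoint S S') ∧
    (∀ i : Fin n, ∃ S : Finset (Fin n), IsCMBS j x₀ S ∧ i ∈ S) :=
  cmbs_partition_general j x₀ horth
end

section
/- In the CMBS setting, let m ≤ n, let J : X → ℝ^{m×n} be continuous at x₀, and suppose that for every x ∈ X and every i ∈ {1,…,m} the i-th row of J(x), viewed as a vector of ℝ^n, lies in the linear span of {ĵ₁(x),…,ĵ_i(x)}. Let a ∈ {1,…,m} and let S be a CMBS at x₀. Then the function x ↦ J_{1:a}(x)·P_{S∩{1,…,a}}(x) is continuous at x₀, where J_{1:a}(x) ∈ ℝ^{a×n} denotes the submatrix consisting of the first a rows of J(x). -/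
/-
Rows `1, …, a` of `J(x)` lie in the span of `ĵ₁(x), …, ĵ_a(x)`, so they are orthogonal to
every `ĵ_k(x)` with `k > a`. Hence the terms `ĵ_k ĵ_kᵀ` with `k > a` are annihilated by
`J_{1:a}(x)`, and `J_{1:a} P_{S ∩ {1,…,a}} = J_{1:a} P_S`: a product of two functions
continuous at `x₀`, the second one by the CMBS property of `S`.
-/

open Matrix

theorem ContinuousAt.matrix_mul {X R l m n : Type*} [TopologicalSpace X] [TopologicalSpace R]
    [Fintype m] [Mul R] [AddCommMonoid R] [ContinuousAdd R] [ContinuousMul R]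
    {A : X → Matrix l m R} {B : X → Matrix m n R} {x₀ : X}
    (hA : ContinuousAt A x₀) (hB : ContinuousAt B x₀) :
    ContinuousAt (fun x => A x * B x) x₀ :=
  (continuous_fst.matrix_mul continuous_snd).continuousAt.comp₂ hA hB

theorem Matrix.dotProduct_eq_zero_of_mem_span {R ι : Type*} [CommSemiring R] [Fintype ι]
    {s : Set (ι → R)} {v w : ι → R} (hv : v ∈ Submodule.span R s)
    (hw : ∀ u ∈ s, u ⬝ᵥ w = 0) : v ⬝ᵥ w = 0 :=
  Submodule.span_le (p := LinearMap.ker ((dotProductBilin R R).flip w)).mpr hw hv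

theorem mul_projSum_filter {X : Type*} {l n : ℕ} (j : Fin n → X → (Fin n → ℝ))
    (S : Finset (Fin n)) (p : Fin n → Prop) [DecidablePred p]
    (A : Matrix (Fin l) (Fin n) ℝ) (x : X) (hA : ∀ k ∈ S, ¬ p k → A *ᵥ j k x = 0) :
    A * projSum j (S.filter p) x = A * projSum j S x := by
  simp only [projSum, Matrix.mul_sum]
  refine Finset.sum_filter_of_ne fun k hk hne => ?_
  by_contra hpk
  exact hne (by rw [mul_vecMulVec, hA k hk hpk, zero_vecMulVec])

theorem cmbs_submatrix_proj_continuousAt_general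
    {X : Type*} [NormedAddCommGroup X]
    {n : ℕ} (j : Fin n → X → (Fin n → ℝ)) (x₀ : X)
    (horth : ∀ x, ∀ i k : Fin n, j i x ⬝ᵥ j k x = if i = k then 1 else 0)
    (m : ℕ)
    (J : X → Matrix (Fin m) (Fin n) ℝ) (hJ : ContinuousAt J x₀)
    (hrow : ∀ (x : X) (i : Fin m),
      J x i ∈ Submodule.span ℝ ((fun k : Fin n => j k x) ''
        {k : Fin n | (k : ℕ) ≤ (i : ℕ)}))
    (a : ℕ) (ham : a ≤ m)
    (S : Finset (Fin n)) (hS : IsCMBS j x₀ S) :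
    ContinuousAt (fun x =>
      (J x).submatrix (Fin.castLE ham) id *
        projSum j (S.filter fun k => (k : ℕ) < a) x) x₀ := by
  have hortho : ∀ x, ∀ k : Fin n, a ≤ k →
      (J x).submatrix (Fin.castLE ham) id *ᵥ j k x = 0 := by
    intro x k hak
    ext p
    refine dotProduct_eq_zero_of_mem_span (hrow x _) ?_
    rintro _ ⟨l, hl, rfl⟩
    have hlk : l ≠ k := fun h => by
      subst h
      exact absurd (hl.trans_lt p.isLt) hak.not_gt
    rw [horth, if_neg hlk]
  have hsub : ContinuousAt (fun x => (J x).submatrix (Fin.castLE ham) id) x₀ :=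
    (continuous_id.matrix_submatrix _ _).continuousAt.comp hJ
  refine (hsub.matrix_mul hS.2.1).congr (Filter.Eventually.of_forall fun x => ?_)
  exact (mul_projSum_filter j S _ _ x fun k _ hk => hortho x k (not_lt.mp hk)).symm

/-- If `J` is continuous at `x₀`, each `i`-th row of `J x` lies in the span of the first
`i` frame vectors, and `S` is a CMBS at `x₀`, then `x ↦ J_{1:a}(x) P_{S ∩ {1,…,a}}(x)`
is continuous at `x₀` (0-indexed: the first `a` rows and indices `k < a`). -/
theorem cmbs_submatrix_proj_continuousAt
    {X : Type*} [NormedAddCommGroup X] [NormedSpace ℝ X]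
    {n : ℕ} (j : Fin n → X → (Fin n → ℝ)) (x₀ : X)
    (horth : ∀ x, ∀ i k : Fin n, j i x ⬝ᵥ j k x = if i = k then 1 else 0)
    (m : ℕ) (hmn : m ≤ n)
    (J : X → Matrix (Fin m) (Fin n) ℝ) (hJ : ContinuousAt J x₀)
    (hrow : ∀ (x : X) (i : Fin m),
      J x i ∈ Submodule.span ℝ ((fun k : Fin n => j k x) ''
        {k : Fin n | (k : ℕ) ≤ (i : ℕ)}))
    (a : ℕ) (ha : 1 ≤ a) (ham : a ≤ m)
    (S : Finset (Fin n)) (hS : IsCMBS j x₀ S) :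
    ContinuousAt (fun x =>
      (J x).submatrix (Fin.castLE ham) id *
        projSum j (S.filter fun k => (k : ℕ) < a) x) x₀ :=
  cmbs_submatrix_proj_continuousAt_general j x₀ horth m J hJ hrow a ham S hS
end

section
/- Let l ≥ 1 and let φ_{ab} ∈ ℝ be given for all indices 1 ≤ b ≤ a ≤ l with φ_{aa} > 0 for all a and φ_{ab} ≥ 0 for all b < a. Then there exist p₁, …, p_l > 0 such that the symmetric matrix Q ∈ ℝ^{l×l} defined by Q_{aa} = p_a φ_{aa} for all a and Q_{ab} = Q_{ba} = −p_a φ_{ab} for all b < a is positive definite. -/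
/-!
Take geometric weights `p a = ε ^ (2 a)` with `0 < ε ≤ 1`. For `b < a`, writing
`ε ^ (2 a) = ε ^ (a - b) ε ^ a ε ^ b` with `ε ^ (a - b) ≤ ε`, AM-GM bounds the cross term
`2 p_a φ_ab x_a x_b` by `ε |φ_ab| (p_a x_a² + p_b x_b²)`. Hence the quadratic form dominates
`∑ a, (φ_aa - ε R_a) p_a x_a²`, where `R_a` is the absolute row-plus-column sum of `φ` at `a`,
and this is positive definite as soon as `ε R_a < φ_aa` for every `a`.
-/

open Matrix Filter Topology

section WeightedMatrix

variable {ι : Type*} [LinearOrder ι]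

def weightedMatrix (p : ι → ℝ) (φ : ι → ι → ℝ) : Matrix ι ι ℝ :=
  of fun a b => if a = b then p a * φ a a else if b < a then -(p a * φ a b) else -(p b * φ b a)

theorem weightedMatrix_isHermitian (p : ι → ℝ) (φ : ι → ι → ℝ) :
    (weightedMatrix p φ).IsHermitian := by
  ext a b
  simp only [weightedMatrix, conjTranspose_apply, of_apply, star_trivial]
  rcases lt_trichotomy a b with h | rfl | h
  · simp [h, h.ne, h.ne', h.not_gt]
  · rfl
  · simp [h, h.ne, h.ne', h.not_gt]

theorem dotProduct_weightedMatrix_mulVec [Fintype ι] (p : ι → ℝ) (φ : ι → ι → ℝ)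
    (x : ι → ℝ) :
    x ⬝ᵥ (weightedMatrix p φ *ᵥ x) =
      ∑ a, p a * φ a a * x a ^ 2 -
        2 * ∑ a, ∑ b, if b < a then p a * φ a b * x a * x b else 0 := by
  have hentry : ∀ a b, x a * (weightedMatrix p φ a b * x b) =
      (if a = b then p a * φ a a * x a ^ 2 else 0) -
        (if b < a then p a * φ a b * x a * x b else 0) -
        (if a < b then p b * φ b a * x b * x a else 0) := by
    intro a b
    rcases lt_trichotomy a b with h | rfl | h
    · simp [weightedMatrix, h, h.ne, h.not_gt]; ring
    · simp [weightedMatrix]; ring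
    · simp [weightedMatrix, h, h.ne', h.not_gt]; ring
  have hswap : (∑ a, ∑ b, if a < b then p b * φ b a * x b * x a else 0) =
      ∑ a, ∑ b, if b < a then p a * φ a b * x a * x b else 0 := Finset.sum_comm
  calc x ⬝ᵥ (weightedMatrix p φ *ᵥ x)
        = ∑ a, ∑ b, x a * (weightedMatrix p φ a b * x b) := by
        simp only [dotProduct, mulVec, Finset.mul_sum]
    _ = _ := by
        simp only [hentry, Finset.sum_sub_distrib, hswap, Finset.sum_ite_eq, Finset.mem_univ,
          if_true]
        ring

end WeightedMatrix

theorem two_mul_le_abs_mul_add_sq (c s t : ℝ) : 2 * (c * s * t) ≤ |c| * (s ^ 2 + t ^ 2) :=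
  calc 2 * (c * s * t) ≤ |c| * (2 * (|s| * |t|)) := by
        have := le_abs_self (2 * (c * s * t))
        simp only [abs_mul, abs_two] at this
        linarith
    _ ≤ |c| * (s ^ 2 + t ^ 2) := by
        gcongr
        simpa only [sq_abs, mul_assoc] using two_mul_le_add_sq |s| |t|

theorem two_mul_geometric_cross_le {ε : ℝ} (hε0 : 0 ≤ ε) (hε1 : ε ≤ 1) {i j : ℕ}
    (hij : i < j) (c u v : ℝ) :
    2 * (ε ^ (2 * j) * c * u * v) ≤
      ε * |c| * (ε ^ (2 * j) * u ^ 2 + ε ^ (2 * i) * v ^ 2) := by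
  obtain ⟨k, rfl⟩ := Nat.exists_eq_add_of_lt hij
  set s := ε ^ (i + k + 1) * u
  set t := ε ^ i * v
  have hsplit : ε ^ (2 * (i + k + 1)) = ε ^ (k + 1) * ε ^ (i + k + 1) * ε ^ i := by
    rw [← pow_add, ← pow_add]; ring_nf
  have hpow : ε ^ (k + 1) ≤ ε := pow_le_of_le_one hε0 hε1 k.succ_ne_zero
  calc 2 * (ε ^ (2 * (i + k + 1)) * c * u * v) = ε ^ (k + 1) * (2 * (c * s * t)) := by
        rw [hsplit]; ring
    _ ≤ ε ^ (k + 1) * (|c| * (s ^ 2 + t ^ 2)) :=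
        mul_le_mul_of_nonneg_left (two_mul_le_abs_mul_add_sq c s t) (by positivity)
    _ ≤ ε * (|c| * (s ^ 2 + t ^ 2)) := by gcongr
    _ = ε * |c| * (ε ^ (2 * (i + k + 1)) * u ^ 2 + ε ^ (2 * i) * v ^ 2) := by ring

section Geometric

variable {n : ℕ}

def geometricWeights (ε : ℝ) (a : Fin n) : ℝ :=
  ε ^ (2 * (a : ℕ))

def absRowColSum (φ : Fin n → Fin n → ℝ) (a : Fin n) : ℝ :=
  ∑ b, (|φ a b| + |φ b a|)

theorem two_mul_sum_geometric_cross_le {ε : ℝ} (hε0 : 0 ≤ ε) (hε1 : ε ≤ 1)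
    (φ : Fin n → Fin n → ℝ) (x : Fin n → ℝ) :
    2 * (∑ a, ∑ b, if b < a then geometricWeights ε a * φ a b * x a * x b else 0) ≤
      ∑ a, ε * absRowColSum φ a * (geometricWeights ε a * x a ^ 2) := by
  set w : Fin n → ℝ := fun a => geometricWeights ε a * x a ^ 2
  have hw : ∀ a, 0 ≤ w a := fun a => by simp only [w, geometricWeights]; positivity
  have hcross : ∀ a b, 2 * (if b < a then geometricWeights ε a * φ a b * x a * x b else 0) ≤
      ε * |φ a b| * (w a + w b) := by
    intro a b
    split_ifs with h
    · exact two_mul_geometric_cross_le hε0 hε1 h _ _ _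
    · have := hw a; have := hw b; simp only [mul_zero]; positivity
  calc _ = ∑ a, ∑ b, 2 * (if b < a then geometricWeights ε a * φ a b * x a * x b else 0) := by
        simp only [Finset.mul_sum]
    _ ≤ ∑ a, ∑ b, ε * |φ a b| * (w a + w b) :=
        Finset.sum_le_sum fun a _ => Finset.sum_le_sum fun b _ => hcross a b
    _ = ∑ a, ∑ b, ε * |φ a b| * w a + ∑ a, ∑ b, ε * |φ b a| * w a := by
        simp only [mul_add, Finset.sum_add_distrib]
        exact congrArg _ Finset.sum_comm
    _ = ∑ a, ε * absRowColSum φ a * w a := by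
        simp only [absRowColSum, ← Finset.sum_add_distrib, Finset.mul_sum, Finset.sum_mul]
        exact Finset.sum_congr rfl fun a _ => Finset.sum_congr rfl fun b _ => by ring

theorem sum_mul_geometric_le_dotProduct_weightedMatrix_mulVec {ε : ℝ} (hε0 : 0 ≤ ε)
    (hε1 : ε ≤ 1) (φ : Fin n → Fin n → ℝ) (x : Fin n → ℝ) :
    ∑ a, (φ a a - ε * absRowColSum φ a) * (geometricWeights ε a * x a ^ 2) ≤
      x ⬝ᵥ (weightedMatrix (geometricWeights ε) φ *ᵥ x) := by
  have hcross := two_mul_sum_geometric_cross_le hε0 hε1 φ x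
  rw [dotProduct_weightedMatrix_mulVec]
  calc _ = ∑ a, geometricWeights ε a * φ a a * x a ^ 2 -
        ∑ a, ε * absRowColSum φ a * (geometricWeights ε a * x a ^ 2) := by
        rw [← Finset.sum_sub_distrib]; exact Finset.sum_congr rfl fun a _ => by ring
    _ ≤ _ := by linarith

theorem posDef_weightedMatrix_geometricWeights {ε : ℝ} (hε0 : 0 < ε) (hε1 : ε ≤ 1)
    (φ : Fin n → Fin n → ℝ) (hsmall : ∀ a, ε * absRowColSum φ a < φ a a) :
    (weightedMatrix (geometricWeights ε) φ).PosDef := by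
  refine PosDef.of_dotProduct_mulVec_pos (weightedMatrix_isHermitian _ _) fun x hx => ?_
  obtain ⟨a, ha⟩ := Function.ne_iff.mp hx
  refine lt_of_lt_of_le ?_ (sum_mul_geometric_le_dotProduct_weightedMatrix_mulVec hε0.le hε1 φ x)
  refine Finset.sum_pos' (fun b _ => ?_) ⟨a, Finset.mem_univ a, ?_⟩
  · have := hsmall b; simp only [geometricWeights]; positivity
  · have := hsmall a; have : 0 < x a ^ 2 := sq_pos_of_ne_zero ha
    simp only [geometricWeights]; positivity

theorem exists_geometric_ratio (φ : Fin n → Fin n → ℝ) (hdiag : ∀ a, 0 < φ a a) :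
    ∃ ε : ℝ, 0 < ε ∧ ε ≤ 1 ∧ ∀ a, ε * absRowColSum φ a < φ a a := by
  have hsmall : ∀ᶠ ε in 𝓝[>] (0 : ℝ), ∀ a, ε * absRowColSum φ a < φ a a := by
    refine eventually_all.2 fun a => nhdsWithin_le_nhds ?_
    have hlim : Tendsto (fun ε : ℝ => ε * absRowColSum φ a) (𝓝 0) (𝓝 0) := by
      simpa using (tendsto_id (x := 𝓝 (0 : ℝ))).mul_const (absRowColSum φ a)
    exact hlim.eventually (gt_mem_nhds (hdiag a))
  have hunit : ∀ᶠ ε in 𝓝[>] (0 : ℝ), ε ∈ Set.Ioc 0 1 := Ioc_mem_nhdsGT zero_lt_one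
  obtain ⟨ε, ⟨hε0, hε1⟩, hε⟩ := (hunit.and hsmall).exists
  exact ⟨ε, hε0, hε1, hε⟩

end Geometric

theorem exists_weights_posDef_general
    (l : ℕ) (φ : Fin l → Fin l → ℝ)
    (hdiag : ∀ a : Fin l, 0 < φ a a) :
    ∃ p : Fin l → ℝ, (∀ a, 0 < p a) ∧
      (Matrix.of fun a b : Fin l =>
        if a = b then p a * φ a a
        else if b < a then -(p a * φ a b)
        else -(p b * φ b a)).PosDef := by
  obtain ⟨ε, hε0, hε1, hsmall⟩ := exists_geometric_ratio φ hdiag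
  exact ⟨geometricWeights ε, fun a => pow_pos hε0 _,
    posDef_weightedMatrix_geometricWeights hε0 hε1 φ hsmall⟩

/-- Given `φ_{ab}` for `b ≤ a` with positive diagonal and nonnegative off-diagonal
entries, one can choose weights `p_a > 0` so that the symmetric matrix `Q` with
`Q_{aa} = p_a φ_{aa}` and `Q_{ab} = Q_{ba} = −p_a φ_{ab}` for `b < a` is positive
definite. -/
theorem exists_weights_posDef
    (l : ℕ) (hl : 1 ≤ l) (φ : Fin l → Fin l → ℝ)
    (hdiag : ∀ a : Fin l, 0 < φ a a)
    (hoff : ∀ a b : Fin l, b < a → 0 ≤ φ a b) :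
    ∃ p : Fin l → ℝ, (∀ a, 0 < p a) ∧
      (Matrix.of fun a b : Fin l =>
        if a = b then p a * φ a a
        else if b < a then -(p a * φ a b)
        else -(p b * φ b a)).PosDef :=
  exists_weights_posDef_general l φ hdiag
end
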